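/- Let X be a completely regular Hausdorff (Tychonoff) space and let H be a non-vanishing closed ideal of C_B(X). Then sp(H) = λ_H X is an open subspace of βX (hence locally compact Hausdorff), contains X as a dense subspace, and H is isometrically isomorphic (as a normed algebra) to C₀(sp(H)), the algebra of continuous 𝔽-valued functions on sp(H) vanishing at infinity. -/

import Mathlib

/-!
Extension `f ↦ f_β` identifies `C_B(X)` isometrically with `C(βX)`, and `H` with a closed ideal `I`
of `C(βX)` whose cozero set is `λ_H X`. Closed ideals of `C(K)`, `K` compact, are exactly the ideals
of functions vanishing off an open set (`ContinuousMap.idealOfSet_ofIdeal_isClosed`), so `I`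
consists of the functions vanishing off `λ_H X`. These are precisely the extensions by zero of
elements of `C₀(λ_H X)`. Restricting `f_β` to `λ_H X` preserves the norm because `λ_H X` contains
`X` (as `H` is non-vanishing), which is dense in `βX`.
-/

open BoundedContinuousFunction Set Filter Topology

section Preamble

variable {X : Type*} [TopologicalSpace X] {𝕜 : Type*} [RCLike 𝕜]

theorem betaExt_aux (f : X →ᵇ 𝕜) :
    Continuous (fun x => (⟨f x, by
      simpa [Metric.mem_closedBall, dist_zero_right] using f.norm_coe_le_norm x⟩ :
        Metric.closedBall (0 : 𝕜) ‖f‖)) :=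
  f.continuous.subtype_mk _

/-- `f_β`, the unique continuous extension of a bounded continuous function `f : X → 𝕜` to the
Stone–Čech compactification `βX`. -/
noncomputable def betaExt (f : X →ᵇ 𝕜) : StoneCech X → 𝕜 :=
  haveI : CompactSpace (Metric.closedBall (0 : 𝕜) ‖f‖) :=
    isCompact_iff_compactSpace.mp (isCompact_closedBall 0 ‖f‖)
  fun p => (stoneCechExtend (betaExt_aux f) p).1

theorem betaExt_unit (f : X →ᵇ 𝕜) (x : X) : betaExt f (stoneCechUnit x) = f x := by
  haveI : CompactSpace (Metric.closedBall (0 : 𝕜) ‖f‖) :=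
    isCompact_iff_compactSpace.mp (isCompact_closedBall 0 ‖f‖)
  exact congrArg Subtype.val (congrFun (stoneCechExtend_extends (betaExt_aux f)) x)

theorem continuous_betaExt (f : X →ᵇ 𝕜) : Continuous (betaExt f) := by
  haveI : CompactSpace (Metric.closedBall (0 : 𝕜) ‖f‖) :=
    isCompact_iff_compactSpace.mp (isCompact_closedBall 0 ‖f‖)
  exact continuous_subtype_val.comp (continuous_stoneCechExtend _)

/-- `λ_G X`, the union over `g ∈ G` of the cozero-sets in `βX` of the extensions `g_β`. -/
def lambdaSet (G : Ideal (X →ᵇ 𝕜)) : Set (StoneCech X) :=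
  ⋃ g ∈ G, {p | betaExt g p ≠ 0}

end Preamble

open scoped ZeroAtInfty

section ExtendByZero

variable {α β : Type*} [TopologicalSpace α] [TopologicalSpace β] [Zero β]

theorem tendsto_cocompact_zero_of_eq_zero_off [CompactSpace α] {g : α → β} (hg : Continuous g)
    {U : Set α} (hgU : ∀ x ∉ U, g x = 0) : Tendsto (fun q : U ↦ g q) (cocompact U) (𝓝 0) := by
  intro N hN
  set S := g ⁻¹' (interior N)ᶜ
  have hSU : S ⊆ U := fun x hxS ↦
    by_contra fun hxU ↦ hxS (hgU x hxU ▸ mem_interior_iff_mem_nhds.mpr hN)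
  refine mem_cocompact.mpr
    ⟨((↑) : U → α) ⁻¹' S, ?_, fun q hq ↦ interior_subset (s := N) (not_not.mp hq)⟩
  rw [Subtype.isCompact_iff, Subtype.image_preimage_coe, inter_eq_right.mpr hSU]
  exact (isOpen_interior.isClosed_compl.preimage hg).isCompact

theorem ZeroAtInftyContinuousMap.continuous_extend_zero [T2Space α] {U : Set α} (hU : IsOpen U)
    (φ : C₀(U, β)) : Continuous (Function.extend ((↑) : U → α) φ 0) := by
  refine continuous_iff_continuousAt.mpr fun p ↦ ?_
  by_cases hp : p ∈ U
  · lift p to U using hp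
    rw [← hU.isOpenEmbedding_subtypeVal.continuousAt_iff,
      Function.extend_comp Subtype.val_injective]
    exact φ.continuous.continuousAt
  have notMem_range : ∀ {q}, q ∉ U → ¬∃ a : U, ↑a = q := fun hq ⟨a, ha⟩ ↦ hq (ha ▸ a.2)
  rw [ContinuousAt, Function.extend_apply' _ _ _ (notMem_range hp), tendsto_def]
  intro N hN
  obtain ⟨K, hK, hKN⟩ := mem_cocompact.mp (φ.zero_at_infty' hN)
  have hK' : (Subtype.val '' K)ᶜ ∈ 𝓝 p :=
    (hK.image continuous_subtype_val).isClosed.isOpen_compl.mem_nhds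
      fun ⟨q, _, hq⟩ ↦ notMem_range hp ⟨q, hq⟩
  filter_upwards [hK'] with q hq
  by_cases hqU : q ∈ U
  · lift q to U using hqU
    rw [mem_preimage, Subtype.val_injective.extend_apply]
    exact hKN fun hqK ↦ hq ⟨q, hqK, rfl⟩
  · rw [mem_preimage, Function.extend_apply' _ _ _ (notMem_range hqU)]
    exact mem_of_mem_nhds hN

end ExtendByZero

section StoneCech

variable {X : Type*} [TopologicalSpace X] {𝕜 : Type*} [RCLike 𝕜]

theorem norm_betaExt_le (f : X →ᵇ 𝕜) (p : StoneCech X) : ‖betaExt f p‖ ≤ ‖f‖ := by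
  have : CompactSpace (Metric.closedBall (0 : 𝕜) ‖f‖) :=
    isCompact_iff_compactSpace.mp (isCompact_closedBall 0 ‖f‖)
  exact mem_closedBall_zero_iff.mp (stoneCechExtend (betaExt_aux f) p).2

theorem betaExt_unique {f : X →ᵇ 𝕜} {Φ : StoneCech X → 𝕜} (hΦ : Continuous Φ)
    (h : ∀ x, Φ (stoneCechUnit x) = f x) : betaExt f = Φ :=
  denseRange_stoneCechUnit.equalizer (continuous_betaExt f) hΦ
    (funext fun x ↦ (betaExt_unit f x).trans (h x).symm)

theorem betaExt_add (f g : X →ᵇ 𝕜) : betaExt (f + g) = betaExt f + betaExt g :=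
  betaExt_unique ((continuous_betaExt f).add (continuous_betaExt g)) fun x ↦ by
    simp [betaExt_unit]

theorem betaExt_mul (f g : X →ᵇ 𝕜) : betaExt (f * g) = betaExt f * betaExt g :=
  betaExt_unique ((continuous_betaExt f).mul (continuous_betaExt g)) fun x ↦ by
    simp [betaExt_unit]

theorem betaExt_smul (c : 𝕜) (f : X →ᵇ 𝕜) : betaExt (c • f) = c • betaExt f :=
  betaExt_unique ((continuous_betaExt f).const_smul c) fun x ↦ by simp [betaExt_unit]

variable (X 𝕜) in
noncomputable def stoneCechRestrict : C(StoneCech X, 𝕜) →+* (X →ᵇ 𝕜) where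
  toFun Ψ := (mkOfCompact Ψ).compContinuous ⟨stoneCechUnit, continuous_stoneCechUnit⟩
  map_one' := rfl
  map_mul' _ _ := rfl
  map_zero' := rfl
  map_add' _ _ := rfl

@[simp]
theorem stoneCechRestrict_apply (Ψ : C(StoneCech X, 𝕜)) (x : X) :
    stoneCechRestrict X 𝕜 Ψ x = Ψ (stoneCechUnit x) :=
  rfl

theorem continuous_stoneCechRestrict : Continuous (stoneCechRestrict X 𝕜) :=
  (continuous_compContinuous _).comp (ContinuousMap.isometryEquivBoundedOfCompact _ _).continuous

theorem betaExt_stoneCechRestrict (Ψ : C(StoneCech X, 𝕜)) :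
    betaExt (stoneCechRestrict X 𝕜 Ψ) = Ψ :=
  betaExt_unique Ψ.continuous fun _ ↦ rfl

theorem stoneCechRestrict_betaExt (f : X →ᵇ 𝕜) :
    stoneCechRestrict X 𝕜 ⟨betaExt f, continuous_betaExt f⟩ = f :=
  ext (betaExt_unit f)

theorem setOfIdeal_comap_stoneCechRestrict (H : Ideal (X →ᵇ 𝕜)) :
    ContinuousMap.setOfIdeal (H.comap (stoneCechRestrict X 𝕜)) = lambdaSet H := by
  ext p
  simp only [ContinuousMap.mem_setOfIdeal, Ideal.mem_comap, lambdaSet, mem_iUnion₂, mem_ofPred_eq,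
    exists_prop]
  constructor
  · rintro ⟨Ψ, hΨ, hp⟩
    exact ⟨_, hΨ, by rwa [betaExt_stoneCechRestrict]⟩
  · rintro ⟨g, hg, hp⟩
    exact ⟨⟨betaExt g, continuous_betaExt g⟩, by rwa [stoneCechRestrict_betaExt], hp⟩

theorem isOpen_lambdaSet (G : Ideal (X →ᵇ 𝕜)) : IsOpen (lambdaSet G) :=
  isOpen_biUnion fun g _ ↦ isOpen_compl_singleton.preimage (continuous_betaExt g)

theorem stoneCechUnit_mem_lambdaSet {H : Ideal (X →ᵇ 𝕜)} (hnv : ∀ x : X, ∃ h ∈ H, h x ≠ 0)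
    (x : X) : stoneCechUnit x ∈ lambdaSet H := by
  obtain ⟨h, hH, hx⟩ := hnv x
  exact mem_biUnion hH (by rwa [mem_ofPred_eq, betaExt_unit])

noncomputable def lambdaRestrict (H : Ideal (X →ᵇ 𝕜)) (f : H) : C₀(lambdaSet H, 𝕜) where
  toFun q := betaExt (f : X →ᵇ 𝕜) q
  continuous_toFun := (continuous_betaExt _).comp continuous_subtype_val
  zero_at_infty' := tendsto_cocompact_zero_of_eq_zero_off (continuous_betaExt _) fun _ hp ↦
    by_contra fun h ↦ hp (mem_biUnion f.2 h)

variable {H : Ideal (X →ᵇ 𝕜)}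

@[simp]
theorem lambdaRestrict_apply (f : H) (q : lambdaSet H) :
    lambdaRestrict H f q = betaExt (f : X →ᵇ 𝕜) q :=
  rfl

theorem lambdaRestrict_add (f g : H) :
    lambdaRestrict H (f + g) = lambdaRestrict H f + lambdaRestrict H g := by
  ext q
  simp [betaExt_add]

theorem lambdaRestrict_smul (c : 𝕜) (f : H) :
    lambdaRestrict H (c • f) = c • lambdaRestrict H f := by
  ext q
  simp [betaExt_smul]

theorem lambdaRestrict_mul (f g : H) (hfg : (f : X →ᵇ 𝕜) * g ∈ H) :
    lambdaRestrict H ⟨f * g, hfg⟩ = lambdaRestrict H f * lambdaRestrict H g := by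
  ext q
  simp [betaExt_mul]

theorem norm_lambdaRestrict (hnv : ∀ x : X, ∃ h ∈ H, h x ≠ 0) (f : H) :
    ‖lambdaRestrict H f‖ = ‖(f : X →ᵇ 𝕜)‖ := by
  rw [← ZeroAtInftyContinuousMap.norm_toBCF_eq_norm]
  refine le_antisymm ((norm_le (norm_nonneg _)).mpr fun _ ↦ norm_betaExt_le _ _)
    ((norm_le (norm_nonneg _)).mpr fun x ↦ ?_)
  calc ‖(f : X →ᵇ 𝕜) x‖
      = ‖(lambdaRestrict H f).toBCF ⟨stoneCechUnit x, stoneCechUnit_mem_lambdaSet hnv x⟩‖ := by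
        simp [betaExt_unit]
    _ ≤ ‖(lambdaRestrict H f).toBCF‖ := norm_coe_le_norm _ _

theorem lambdaRestrict_injective (hnv : ∀ x : X, ∃ h ∈ H, h x ≠ 0) :
    Function.Injective (lambdaRestrict H) := fun f g hfg ↦ Subtype.ext <| ext fun x ↦ by
  simpa [betaExt_unit] using DFunLike.congr_fun hfg ⟨_, stoneCechUnit_mem_lambdaSet hnv x⟩

theorem lambdaRestrict_surjective (hcl : IsClosed (H : Set (X →ᵇ 𝕜))) :
    Function.Surjective (lambdaRestrict H) := by
  intro φ
  set Φ : C(StoneCech X, 𝕜) := ⟨_, φ.continuous_extend_zero (isOpen_lambdaSet H)⟩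
  have hΦ : Φ ∈ H.comap (stoneCechRestrict X 𝕜) := by
    rw [← ContinuousMap.idealOfSet_ofIdeal_isClosed (I := H.comap (stoneCechRestrict X 𝕜))
        (hcl.preimage continuous_stoneCechRestrict),
      setOfIdeal_comap_stoneCechRestrict, ContinuousMap.mem_idealOfSet]
    exact fun p hp ↦ Function.extend_apply' _ _ _ fun ⟨q, hq⟩ ↦ hp (hq ▸ q.2)
  refine ⟨⟨_, hΦ⟩, ZeroAtInftyContinuousMap.ext fun q ↦ ?_⟩
  rw [lambdaRestrict_apply, betaExt_stoneCechRestrict]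
  exact Subtype.val_injective.extend_apply _ _ q

end StoneCech

theorem spectrum_spec_general {X : Type*} [TopologicalSpace X]
    {𝕜 : Type*} [RCLike 𝕜] (H : Ideal (X →ᵇ 𝕜))
    (hcl : IsClosed (H : Set (X →ᵇ 𝕜))) (hnv : ∀ x : X, ∃ h ∈ H, h x ≠ 0) :
    IsOpen (lambdaSet H) ∧
    LocallyCompactSpace (lambdaSet H) ∧ T2Space (lambdaSet H) ∧
    (∀ x : X, stoneCechUnit x ∈ lambdaSet H) ∧
    Dense {p : lambdaSet H | (p : StoneCech X) ∈ range (stoneCechUnit : X → StoneCech X)} ∧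
    ∃ e : H → C₀(lambdaSet H, 𝕜),
      Function.Bijective e ∧
      (∀ f g : H, e (f + g) = e f + e g) ∧
      (∀ (c : 𝕜) (f : H), e ⟨c • (f : X →ᵇ 𝕜), H.smul_of_tower_mem c f.2⟩ = c • e f) ∧
      (∀ f g : H, e ⟨(f : X →ᵇ 𝕜) * (g : X →ᵇ 𝕜), H.mul_mem_left _ g.2⟩ = e f * e g) ∧
      (∀ f : H, ‖e f‖ = ‖(f : X →ᵇ 𝕜)‖) := by
  have hopen := isOpen_lambdaSet H
  exact ⟨hopen, hopen.locallyCompactSpace, inferInstance, stoneCechUnit_mem_lambdaSet hnv,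
    denseRange_stoneCechUnit.preimage hopen.isOpenMap_subtype_val, lambdaRestrict H,
    ⟨lambdaRestrict_injective hnv, lambdaRestrict_surjective hcl⟩, lambdaRestrict_add,
    lambdaRestrict_smul, fun f g ↦ lambdaRestrict_mul f g _, norm_lambdaRestrict hnv⟩

/-- For a Tychonoff space `X` and a non-vanishing closed ideal `H` of `C_B(X)`, the spectrum
`sp(H) = λ_H X` is open in `βX` (hence locally compact Hausdorff), contains (the copy of) `X`
as a dense subspace, and `H` is isometrically isomorphic as a normed algebra to
`C₀(sp(H))`. -/
theorem spectrum_spec {X : Type*} [TopologicalSpace X] [T35Space X]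
    {𝕜 : Type*} [RCLike 𝕜] (H : Ideal (X →ᵇ 𝕜))
    (hcl : IsClosed (H : Set (X →ᵇ 𝕜))) (hnv : ∀ x : X, ∃ h ∈ H, h x ≠ 0) :
    IsOpen (lambdaSet H) ∧
    LocallyCompactSpace (lambdaSet H) ∧ T2Space (lambdaSet H) ∧
    (∀ x : X, stoneCechUnit x ∈ lambdaSet H) ∧
    Dense {p : lambdaSet H | (p : StoneCech X) ∈ range (stoneCechUnit : X → StoneCech X)} ∧
    ∃ e : H → C₀(lambdaSet H, 𝕜),
      Function.Bijective e ∧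
      (∀ f g : H, e (f + g) = e f + e g) ∧
      (∀ (c : 𝕜) (f : H), e ⟨c • (f : X →ᵇ 𝕜), H.smul_of_tower_mem c f.2⟩ = c • e f) ∧
      (∀ f g : H, e ⟨(f : X →ᵇ 𝕜) * (g : X →ᵇ 𝕜), H.mul_mem_left _ g.2⟩ = e f * e g) ∧
      (∀ f : H, ‖e f‖ = ‖(f : X →ᵇ 𝕜)‖) :=
  spectrum_spec_general H hcl hnv
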